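/- arXiv:1902.00213 — 7 statements merged into one kernel-verified Lean document; each statement's English description precedes it below -/
import Mathlib

section
/- A bipartite graph G with bipartition (X,Y) admits an S-free pair of orderings if and only if the partially oriented complement of G admits an acyclic T-free orientation (i.e., an orientation of all edges within X and within Y, leaving edges between X and Y of the bipartite complement undirected, such that no two independent edges of the bipartite complement agree, and the orientations within X and within Y are acyclic). -/
/-!
Read an `S`-free pair of orders as an orientation of the complement: the `S`-free
condition then says literally that no two independent edges agree, i.e. that the
orientation is `T`-free. What remains is that an orientation is acyclic iff it is
transitive: a failure of transitivity `u → v → w` with `w → u` is a directed triangle.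
-/

namespace CocompBigraph

variable {V : Type*}

/-- `side` is a bipartition of the simple graph `G`: edges only join the two sides. -/
def IsBipartition (G : SimpleGraph V) (side : V → Bool) : Prop :=
  ∀ u v, G.Adj u v → side u ≠ side v

/-- Two edges `xy`, `x'y'` (with `x, x'` on one side and `y, y'` on the other) are
independent: they are disjoint and neither `xy'` nor `x'y` is an edge. -/
def Indep (G : SimpleGraph V) (x y x' y' : V) : Prop :=
  G.Adj x y ∧ G.Adj x' y' ∧ x ≠ x' ∧ y ≠ y' ∧ ¬ G.Adj x y' ∧ ¬ G.Adj x' y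

/-- `w` is a walk of length `n` in `G` (vertices `w 0, …, w n`). -/
def IsWalk (G : SimpleGraph V) (n : ℕ) (w : ℕ → V) : Prop :=
  ∀ i < n, G.Adj (w i) (w (i+1))

/-- Two walks of the same length `n`, beginning on the same side, are congruent if
for each `i` their `i`-th edges are independent. -/
def CongWalks (G : SimpleGraph V) (side : V → Bool) (n : ℕ) (w w' : ℕ → V) : Prop :=
  side (w 0) = side (w' 0) ∧
  IsWalk G n w ∧ IsWalk G n w' ∧
  ∀ i < n, Indep G (w i) (w (i+1)) (w' i) (w' (i+1))

/-- `(a,b) Γ (f,g)`: there are congruent walks from `a` to `f` and from `b` to `g`. -/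
def Gamma (G : SimpleGraph V) (side : V → Bool) (a b f g : V) : Prop :=
  ∃ n, ∃ w w' : ℕ → V, CongWalks G side n w w' ∧
    w 0 = a ∧ w' 0 = b ∧ w n = f ∧ w' n = g

/-- A pair of distinct vertices `u, v` is invertible if there are congruent walks
from `u` to `v` and from `v` to `u`. -/
def InvertiblePair (G : SimpleGraph V) (side : V → Bool) (u v : V) : Prop :=
  u ≠ v ∧ Gamma G side u v v u

/-- A pair `(a,b)` is relevant if its implication class contains at least two pairs. -/
def Relevant (G : SimpleGraph V) (side : V → Bool) (a b : V) : Prop :=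
  ∃ f g, Gamma G side a b f g ∧ (f, g) ≠ (a, b)

/-- An orientation of the complement of `G`: every pair of distinct vertices on the
same side gets exactly one direction (cross pairs stay undirected). -/
def IsOrientation (side : V → Bool) (O : V → V → Prop) : Prop :=
  (∀ u v, O u v → side u = side v ∧ u ≠ v) ∧
  (∀ u v, u ≠ v → side u = side v → (O u v ↔ ¬ O v u))

/-- The orientation `O` is `T`-free: no two independent edges of the bipartite
complement agree in `O`. -/
def TFree (G : SimpleGraph V) (side : V → Bool) (O : V → V → Prop) : Prop :=
  ∀ x y x' y', side x = side x' → side y = side y' → side x ≠ side y →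
    x ≠ x' → y ≠ y' → ¬ G.Adj x y → ¬ G.Adj x' y' →
    G.Adj x y' → G.Adj x' y → ¬ (O x x' ∧ O y y')

/-- The relation `O` has no directed cycle. -/
def OAcyclic (O : V → V → Prop) : Prop :=
  ∀ (n : ℕ) (w : ℕ → V), 0 < n → (∀ i < n, O (w i) (w (i+1))) → w 0 ≠ w n

/-- `G` has an `S`-free pair of orderings: linear orders of the two sides such that
no two independent edges cross. -/
def SFreePair (G : SimpleGraph V) (side : V → Bool) : Prop :=
  ∃ lt : V → V → Prop,
    (∀ u v, lt u v → side u = side v ∧ u ≠ v) ∧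
    (∀ u v, u ≠ v → side u = side v → (lt u v ↔ ¬ lt v u)) ∧
    (∀ u v w, lt u v → lt v w → lt u w) ∧
    (∀ u v w z, side u ≠ side w → lt u v → lt w z →
      G.Adj u z → G.Adj v w → (G.Adj u w ∨ G.Adj v z))

/-- An edge-asteroid: `2k+1` distinct edges `x i — y i` such that for each `i` there
is a walk joining the edges `e (i+k)` and `e (i+k+1)` (including both endpoints of
each) containing no vertex adjacent to either end of `e i`. -/
def EdgeAsteroid (G : SimpleGraph V) (k : ℕ) (x y : ZMod (2*k+1) → V) : Prop :=
  1 ≤ k ∧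
  (∀ i, G.Adj (x i) (y i)) ∧
  (∀ i j : ZMod (2*k+1), i ≠ j → (x i, y i) ≠ (x j, y j)) ∧
  ∀ i : ZMod (2*k+1), ∃ n, ∃ w : ℕ → V, IsWalk G n w ∧ 1 ≤ n ∧
    ((w 0 = x (i+k) ∧ w 1 = y (i+k)) ∨ (w 0 = y (i+k) ∧ w 1 = x (i+k))) ∧
    ((w (n-1) = y (i+k+1) ∧ w n = x (i+k+1)) ∨
      (w (n-1) = x (i+k+1) ∧ w n = y (i+k+1))) ∧
    ∀ j ≤ n, ¬ G.Adj (w j) (x i) ∧ ¬ G.Adj (w j) (y i)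

/-- An asteroid in a graph `H`: `2k+1` distinct vertices such that for each `i` there
is a path joining `v (i+k)` and `v (i+k+1)` none of whose vertices is a neighbour
of `v i`. -/
def Asteroid {W : Type*} (H : SimpleGraph W) (k : ℕ) (v : ZMod (2*k+1) → W) : Prop :=
  1 ≤ k ∧ Function.Injective v ∧
  ∀ i : ZMod (2*k+1), ∃ n, ∃ w : ℕ → W, IsWalk H n w ∧
    w 0 = v (i+k) ∧ w n = v (i+(k+1)) ∧
    (∀ a ≤ n, ∀ b ≤ n, w a = w b → a = b) ∧
    ∀ j ≤ n, ¬ H.Adj (w j) (v i)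

/-- The independence graph `I(G)`: vertices are the edges of `G` (oriented from side
`true` to side `false`), adjacent iff independent. -/
def IndepGraph (G : SimpleGraph V) (side : V → Bool) :
    SimpleGraph {p : V × V // G.Adj p.1 p.2 ∧ side p.1 = true} where
  Adj e f := Indep G e.1.1 e.1.2 f.1.1 f.1.2
  symm := by
    constructor
    rintro e f ⟨h1, h2, h3, h4, h5, h6⟩
    exact ⟨h2, h1, h3.symm, h4.symm, h6, h5⟩
  loopless := by
    constructor
    rintro e ⟨_, _, h3, _⟩
    exact h3 rfl

/-- A graph is a comparability graph iff it has a transitive orientation. -/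
def HasTransitiveOrientation {W : Type*} (H : SimpleGraph W) : Prop :=
  ∃ r : W → W → Prop,
    (∀ u v, r u v → H.Adj u v) ∧
    (∀ u v, H.Adj u v → (r u v ↔ ¬ r v u)) ∧
    (∀ u v w, r u v → r v w → r u w)

/-- The cycle `C_n` on vertex set `ZMod n`. -/
def cycleGraph (n : ℕ) : SimpleGraph (ZMod n) where
  Adj i j := i ≠ j ∧ (j = i + 1 ∨ i = j + 1)
  symm := by constructor; rintro i j ⟨h, h'⟩; exact ⟨h.symm, h'.symm⟩
  loopless := by constructor; rintro i ⟨h, _⟩; exact h rfl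

/-- `G` contains an induced cycle of length `n`. -/
def HasInducedCycle (G : SimpleGraph V) (n : ℕ) : Prop :=
  ∃ f : ZMod n → V, Function.Injective f ∧
    ∀ i j, G.Adj (f i) (f j) ↔ (cycleGraph n).Adj i j

/-- Adjacency of the auxiliary graph `G⁺` on ordered pairs:
`(u,v)` is adjacent to `(v,u)` and to every `(z,w)` such that `uw` and `vz` are
independent edges of `G`. -/
def AuxAdj (G : SimpleGraph V) (p q : V × V) : Prop :=
  (q.1 = p.2 ∧ q.2 = p.1) ∨
  (G.Adj p.1 q.2 ∧ G.Adj p.2 q.1 ∧ p.1 ≠ p.2 ∧ q.1 ≠ q.2 ∧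
    ¬ G.Adj p.1 q.1 ∧ ¬ G.Adj p.2 q.2)

/-- The auxiliary graph `G⁺`, on the set `F` of ordered pairs of distinct same-side
vertices, is bipartite (i.e. properly 2-colourable). -/
def AuxBipartite (G : SimpleGraph V) (side : V → Bool) : Prop :=
  ∃ c : {p : V × V // p.1 ≠ p.2 ∧ side p.1 = side p.2} → Bool,
    ∀ p q, AuxAdj G p.1 q.1 → c p ≠ c q

/-- `G` is an interval containment bigraph. -/
def IntervalContainment (G : SimpleGraph V) (side : V → Bool) : Prop :=
  ∃ l r : V → ℝ, (∀ v, l v ≤ r v) ∧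
    ∀ x y, side x = true → side y = false →
      (G.Adj x y ↔ (l x ≤ l y ∧ r y ≤ r x))

def IsSFree (G : SimpleGraph V) (side : V → Bool) (lt : V → V → Prop) : Prop :=
  ∀ u v w z, side u ≠ side w → lt u v → lt w z →
    G.Adj u z → G.Adj v w → G.Adj u w ∨ G.Adj v z

theorem sFreePair_iff {G : SimpleGraph V} {side : V → Bool} :
    SFreePair G side ↔ ∃ lt, IsOrientation side lt ∧ IsTrans V lt ∧ IsSFree G side lt :=
  exists_congr fun _ =>
    ⟨fun ⟨h₁, h₂, h₃, h₄⟩ => ⟨⟨h₁, h₂⟩, ⟨h₃⟩, h₄⟩,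
      fun ⟨⟨h₁, h₂⟩, h₃, h₄⟩ => ⟨h₁, h₂, h₃.trans, h₄⟩⟩

theorem tFree_iff_isSFree {G : SimpleGraph V} {side : V → Bool} {O : V → V → Prop}
    (hO : ∀ u v, O u v → side u = side v ∧ u ≠ v) :
    TFree G side O ↔ IsSFree G side O := by
  constructor
  · intro hT u v w z hside huv hwz huz hvw
    by_contra! hc
    exact hT u w v z (hO _ _ huv).1 (hO _ _ hwz).1 hside (hO _ _ huv).2 (hO _ _ hwz).2
      hc.1 hc.2 huz hvw ⟨huv, hwz⟩
  · rintro hS x y x' y' - - hside - - hxy hx'y' hxy' hx'y ⟨hxx', hyy'⟩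
    rcases hS x x' y y' hside hxx' hyy' hxy' hx'y with h | h
    exacts [hxy h, hx'y' h]

theorem _root_.IsTrans.rel_of_chain {r : V → V → Prop} (hr : IsTrans V r) :
    ∀ {n : ℕ}, 0 < n → ∀ {w : ℕ → V}, (∀ i < n, r (w i) (w (i + 1))) → r (w 0) (w n)
  | 1, _, _, hw => hw 0 one_pos
  | n + 2, _, _, hw =>
    hr.trans _ _ _ (hr.rel_of_chain n.succ_pos fun i hi => hw i (by omega))
      (hw (n + 1) (by omega))

theorem oAcyclic_of_irrefl_of_trans {O : V → V → Prop} (hirr : ∀ u, ¬ O u u)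
    (htr : IsTrans V O) : OAcyclic O := fun _ _ hn hw hcycle =>
  hirr _ (hcycle ▸ htr.rel_of_chain hn hw)

theorem OAcyclic.asymm {O : V → V → Prop} (hac : OAcyclic O) {u v : V}
    (huv : O u v) : ¬ O v u := by
  intro hvu
  refine hac 2 (fun i => if i = 1 then v else u) two_pos (fun i hi => ?_) rfl
  interval_cases i <;> simpa

theorem OAcyclic.not_cycle3 {O : V → V → Prop} (hac : OAcyclic O) {u v w : V}
    (huv : O u v) (hvw : O v w) (hwu : O w u) : False := by
  refine hac 3 (fun i => if i = 1 then v else if i = 2 then w else u) (by norm_num)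
    (fun i hi => ?_) rfl
  interval_cases i <;> simpa

theorem IsOrientation.oAcyclic_iff_isTrans {side : V → Bool} {O : V → V → Prop}
    (hO : IsOrientation side O) : OAcyclic O ↔ IsTrans V O := by
  refine ⟨fun hac => ⟨fun u v w huv hvw => ?_⟩,
    oAcyclic_of_irrefl_of_trans fun u huu => (hO.1 u u huu).2 rfl⟩
  by_cases huw : u = w
  · subst huw
    exact (hac.asymm huv hvw).elim
  · by_contra hc
    have hside : side w = side u := ((hO.1 _ _ huv).1.trans (hO.1 _ _ hvw).1).symm
    exact hac.not_cycle3 huv hvw ((hO.2 w u (Ne.symm huw) hside).2 hc)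

theorem stmt_1_general (G : SimpleGraph V) (side : V → Bool) :
    SFreePair G side ↔
      ∃ O : V → V → Prop, IsOrientation side O ∧ TFree G side O ∧ OAcyclic O := by
  rw [sFreePair_iff]
  refine exists_congr fun O => and_congr_right fun hO => ?_
  rw [tFree_iff_isSFree hO.1, hO.oAcyclic_iff_isTrans, and_comm]

/-- `G` admits an `S`-free pair of orderings iff the complement of `G`
admits an acyclic `T`-free orientation. -/
theorem stmt_1 (G : SimpleGraph V) (side : V → Bool) (hbip : IsBipartition G side) :
    SFreePair G side ↔
      ∃ O : V → V → Prop, IsOrientation side O ∧ TFree G side O ∧ OAcyclic O :=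
  stmt_1_general G side

end CocompBigraph
end

section
/- If a bipartite graph G contains an edge-asteroid, then G contains an invertible pair. -/
namespace CocompBigraph

variable {V : Type*}

/-! Along the walk `P_i` joining `e_{i+k}` to `e_{i+k+1}` outside the neighbourhood of
`e_i`, a second walk oscillating on `e_i` is congruent to it; by bipartiteness the
oscillating vertex can be kept on the side of the walking one. Alternating the roles of the
two coordinates moves the pair `(x_k, x_0)` through `(e_k, e_0) → (e_{k+1}, e_0) →
(e_{k+1}, e_1) → ⋯ → (e_{2k}, e_k) → (e_0, e_k)`, hence `(x_k, x_0) Γ (x_0, x_k)`. -/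

open Relation

theorem exists_chain_of_reflTransGen {α : Type*} {r : α → α → Prop} {a b : α}
    (h : ReflTransGen r a b) :
    ∃ n, ∃ f : ℕ → α, f 0 = a ∧ f n = b ∧ ∀ i < n, r (f i) (f (i + 1)) := by
  induction h with
  | refl => exact ⟨0, fun _ => a, rfl, rfl, by simp⟩
  | @tail b c _ hbc ih =>
    obtain ⟨n, f, hf0, hfn, hf⟩ := ih
    refine ⟨n + 1, fun i => if i ≤ n then f i else c, by simpa using hf0, by simp, ?_⟩
    intro i hi
    rcases Nat.lt_or_eq_of_le (Nat.le_of_lt_succ hi) with hi | rfl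
    · simpa [hi.le, Nat.succ_le_of_lt hi] using hf i hi
    · simpa [hfn] using hbc

variable {G : SimpleGraph V} {side : V → Bool}

theorem indep_comm {a b c d : V} (h : Indep G a b c d) : Indep G c d a b :=
  ⟨h.2.1, h.1, h.2.2.1.symm, h.2.2.2.1.symm, h.2.2.2.2.2, h.2.2.2.2.1⟩

theorem indep_reverse {a b c d : V} (h : Indep G a b c d) : Indep G b a d c :=
  ⟨h.1.symm, h.2.1.symm, h.2.2.2.1, h.2.2.1, fun h' => h.2.2.2.2.2 h'.symm,
    fun h' => h.2.2.2.2.1 h'.symm⟩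

/-- One step of a pair of congruent walks: `(a, b)` to `(c, d)` with `ac`, `bd` independent. -/
def CongStep (G : SimpleGraph V) (p q : V × V) : Prop :=
  Indep G p.1 q.1 p.2 q.2

theorem reflTransGen_congStep_swap {p q : V × V} (h : ReflTransGen (CongStep G) p q) :
    ReflTransGen (CongStep G) p.swap q.swap :=
  h.lift Prod.swap fun _ _ => indep_comm

theorem gamma_of_reflTransGen {a b f g : V} (hs : side a = side b)
    (h : ReflTransGen (CongStep G) (a, b) (f, g)) : Gamma G side a b f g := by
  obtain ⟨n, p, hp0, hpn, hp⟩ := exists_chain_of_reflTransGen h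
  refine ⟨n, fun i => (p i).1, fun i => (p i).2, ⟨?_, fun i hi => (hp i hi).1,
    fun i hi => (hp i hi).2.1, hp⟩, ?_, ?_, ?_, ?_⟩ <;> simp [hp0, hpn, hs]

def sideMate (side : V → Bool) (p q v : V) : V :=
  if side v = side p then p else q

theorem IsBipartition.adj_sideMate (hbip : IsBipartition G side) {p q u v : V}
    (hpq : G.Adj p q) (huv : G.Adj u v) :
    G.Adj (sideMate side p q u) (sideMate side p q v) := by
  have hpq' := hbip p q hpq
  have huv' := hbip u v huv
  unfold sideMate
  cases hp : side p <;> cases hq : side q <;> cases hu : side u <;> cases hv : side v <;>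
    simp_all [G.adj_comm q p]

theorem IsBipartition.indep_sideMate (hbip : IsBipartition G side) {p q u v : V}
    (hpq : G.Adj p q) (huv : G.Adj u v) (hu : ¬ G.Adj u p ∧ ¬ G.Adj u q)
    (hv : ¬ G.Adj v p ∧ ¬ G.Adj v q) :
    Indep G u v (sideMate side p q u) (sideMate side p q v) := by
  have hmate : ∀ w, sideMate side p q w = p ∨ sideMate side p q w = q := fun w => by
    unfold sideMate; split_ifs <;> simp
  have hadj := hbip.adj_sideMate hpq huv
  have hu' : ¬ G.Adj u (sideMate side p q v) := by rcases hmate v with h | h <;> simp [h, hu]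
  have hv' : ¬ G.Adj v (sideMate side p q u) := by rcases hmate u with h | h <;> simp [h, hv]
  refine ⟨huv, hadj, ?_, ?_, hu', fun h => hv' h.symm⟩
  · intro he; rw [← he] at hadj; exact hu' hadj
  · intro he; rw [← he] at hadj; exact hv' hadj.symm

theorem IsBipartition.reflTransGen_sideMate_of_isWalk (hbip : IsBipartition G side) {p q : V}
    (hpq : G.Adj p q) {n : ℕ} {w : ℕ → V} (hw : IsWalk G n w)
    (havoid : ∀ j ≤ n, ¬ G.Adj (w j) p ∧ ¬ G.Adj (w j) q) {i j : ℕ} (hi : i ≤ n) (hj : j ≤ n) :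
    ReflTransGen (CongStep G)
      (w i, sideMate side p q (w i)) (w j, sideMate side p q (w j)) := by
  have hstep : ∀ l < n, CongStep G (w l, sideMate side p q (w l))
      (w (l + 1), sideMate side p q (w (l + 1))) := fun l hl =>
    hbip.indep_sideMate hpq (hw l hl) (havoid l hl.le) (havoid (l + 1) hl)
  have hchain := reflTransGen_of_succ (fun a b => CongStep G (w a, sideMate side p q (w a))
      (w b, sideMate side p q (w b))) (n := i) (m := j)
    (fun l hl => hstep l (by simp at hl; omega))
    (fun l hl => indep_reverse (hstep l (by simp at hl; omega)))
  exact hchain.lift (fun l => (w l, sideMate side p q (w l))) fun _ _ h => h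

namespace EdgeAsteroid

variable {k : ℕ} {x y : ZMod (2 * k + 1) → V}

theorem exists_walk (h : EdgeAsteroid G k x y) (i : ZMod (2 * k + 1)) :
    ∃ n, ∃ w : ℕ → V, IsWalk G n w ∧
      (∀ j ≤ n, ¬ G.Adj (w j) (x i) ∧ ¬ G.Adj (w j) (y i)) ∧
      (∃ s ≤ n, w s = x (i + k)) ∧ ∃ t ≤ n, w t = x (i + k + 1) := by
  obtain ⟨n, w, hw, hn, hstart, hend, havoid⟩ := h.2.2.2 i
  refine ⟨n, w, hw, havoid, ?_, ?_⟩
  · rcases hstart with ⟨h0, -⟩ | ⟨-, h1⟩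
    exacts [⟨0, n.zero_le, h0⟩, ⟨1, hn, h1⟩]
  · rcases hend with ⟨-, hn'⟩ | ⟨hn', -⟩
    exacts [⟨n, le_rfl, hn'⟩, ⟨n - 1, n.sub_le 1, hn'⟩]

theorem x_add_ne (h : EdgeAsteroid G k x y) (i : ZMod (2 * k + 1)) : x (i + k) ≠ x i := by
  obtain ⟨n, w, -, havoid, ⟨s, hs, hws⟩, -⟩ := h.exists_walk i
  intro hx
  exact (havoid s hs).2 (hws ▸ hx ▸ h.2.1 i)

theorem reflTransGen_step (hbip : IsBipartition G side) (hx : ∀ i, side (x i) = true)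
    (h : EdgeAsteroid G k x y) (i : ZMod (2 * k + 1)) :
    ReflTransGen (CongStep G) (x (i + k), x i) (x (i + k + 1), x i) := by
  obtain ⟨n, w, hw, havoid, ⟨s, hs, hws⟩, t, ht, hwt⟩ := h.exists_walk i
  have hmate : ∀ j, sideMate side (x i) (y i) (x j) = x i := fun j => by simp [sideMate, hx]
  simpa [hws, hwt, hmate] using hbip.reflTransGen_sideMate_of_isWalk (h.2.1 i) hw havoid hs ht

theorem reflTransGen_shift (hbip : IsBipartition G side) (hx : ∀ i, side (x i) = true)
    (h : EdgeAsteroid G k x y) (i : ZMod (2 * k + 1)) :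
    ReflTransGen (CongStep G) (x (i + k), x i) (x (i + k + 1), x (i + 1)) := by
  have hcycle : (2 * k + 1 : ZMod (2 * k + 1)) = 0 := by exact_mod_cast ZMod.natCast_self _
  have hback := reflTransGen_congStep_swap (h.reflTransGen_step hbip hx (i + k + 1))
  rw [show i + k + 1 + k + 1 = i + 1 by linear_combination hcycle,
    show i + k + 1 + k = i by linear_combination hcycle] at hback
  exact (h.reflTransGen_step hbip hx i).trans hback

theorem reflTransGen_reverse (hbip : IsBipartition G side) (hx : ∀ i, side (x i) = true)
    (h : EdgeAsteroid G k x y) :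
    ReflTransGen (CongStep G) (x k, x 0) (x 0, x k) := by
  have hcycle : (2 * k + 1 : ZMod (2 * k + 1)) = 0 := by exact_mod_cast ZMod.natCast_self _
  have hshift : ∀ t : ℕ, ReflTransGen (CongStep G) (x k, x 0) (x (k + t), x t) := by
    intro t
    induction t with
    | zero => simpa using ReflTransGen.refl
    | succ t ih =>
      have hnext := h.reflTransGen_shift hbip hx t
      rw [add_comm (t : ZMod (2 * k + 1))] at hnext
      push_cast
      rw [← add_assoc]
      exact ih.trans hnext
  have hlast := h.reflTransGen_step hbip hx k
  rw [show (k + k + 1 : ZMod (2 * k + 1)) = 0 by linear_combination hcycle] at hlast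
  exact (hshift k).trans hlast

end EdgeAsteroid

/-- if `G` contains an edge-asteroid, then `G` contains an invertible
pair. -/
theorem stmt_3 (G : SimpleGraph V) (side : V → Bool) (hbip : IsBipartition G side)
    (k : ℕ) (x y : ZMod (2*k+1) → V) (hx : ∀ i, side (x i) = true)
    (h : EdgeAsteroid G k x y) :
    ∃ u v, InvertiblePair G side u v :=
  ⟨x k, x 0, by simpa using h.x_add_ne 0,
    gamma_of_reflTransGen ((hx _).trans (hx _).symm) (h.reflTransGen_reverse hbip hx)⟩

end CocompBigraph
end

section
/- If there exist congruent walks from a to f and from b to g in a bipartite graph, then there exist standard congruent walks from a to f and from b to g (where a pair of congruent walks a_1...a_k, b_1...b_k is standard if for each i = 1,...,k−2, a_i = a_{i+2} or b_i = b_{i+2}). -/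
namespace CocompBigraph

variable {V : Type*}

def IsStandard (n : ℕ) (w w' : ℕ → V) : Prop :=
  ∀ i, i + 2 ≤ n → (w i = w (i+2) ∨ w' i = w' (i+2))

def StandardGamma (G : SimpleGraph V) (side : V → Bool) (a b f g : V) : Prop :=
  ∃ n, ∃ w w' : ℕ → V, CongWalks G side n w w' ∧
    w 0 = a ∧ w' 0 = b ∧ w n = f ∧ w' n = g ∧ IsStandard n w w'

variable {G : SimpleGraph V} {side : V → Bool}

lemma Indep.backtrack {p x p' x' y y' : V} (hprev : Indep G p x p' x')
    (hnext : Indep G x y x' y') : Indep G x y x' p' := by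
  obtain ⟨-, hp'x', -, -, -, hp'x⟩ := hprev
  obtain ⟨hxy, -, hxx', -, -, hx'y⟩ := hnext
  exact ⟨hxy, hp'x'.symm, hxx', fun h => hx'y (h ▸ hp'x'.symm),
    fun h => hp'x h.symm, hx'y⟩

lemma Indep.swap {x y x' y' : V} (h : Indep G x y x' y') : Indep G y x y' x' := by
  obtain ⟨hxy, hx'y', hxx', hyy', hxy', hx'y⟩ := h
  exact ⟨hxy.symm, hx'y'.symm, hyy', hxx', fun h => hx'y h.symm, fun h => hxy' h.symm⟩

lemma CongWalks.of_succ {n : ℕ} {w w' : ℕ → V} (h : CongWalks G side (n+1) w w') :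
    CongWalks G side n w w' :=
  ⟨h.1, fun i hi => h.2.1 i (by omega), fun i hi => h.2.2.1 i (by omega),
    fun i hi => h.2.2.2 i (by omega)⟩

lemma CongWalks.snoc {n : ℕ} {w w' : ℕ → V} {y y' : V} (h : CongWalks G side n w w')
    (hlast : Indep G (w n) y (w' n) y') :
    CongWalks G side (n+1) (Function.update w (n+1) y) (Function.update w' (n+1) y') := by
  obtain ⟨hside, hw, hw', hind⟩ := h
  have hn : n ≠ n + 1 := by omega
  refine ⟨by simpa, fun i hi => ?_, fun i hi => ?_, fun i hi => ?_⟩ <;>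
    obtain hi | rfl := Nat.lt_succ_iff_lt_or_eq.mp hi
  all_goals first
    | simp only [Function.update_of_ne (show i ≠ n + 1 by omega),
        Function.update_of_ne (show i + 1 ≠ n + 1 by omega)]
    | simp only [Function.update_self, Function.update_of_ne hn]
  exacts [hw i hi, hlast.1, hw' i hi, hlast.2.1, hind i hi, hlast]

lemma IsStandard.snoc {n : ℕ} {w w' : ℕ → V} {y y' : V} (h : IsStandard (n+1) w w')
    (hturn : w n = y ∨ w' n = y') :
    IsStandard (n+2) (Function.update w (n+2) y) (Function.update w' (n+2) y') := by
  intro i hi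
  obtain hin | rfl : i < n ∨ i = n := by omega
  · simpa [Function.update_of_ne (show i ≠ n + 2 by omega),
      Function.update_of_ne (show i + 2 ≠ n + 2 by omega)] using h i (by omega)
  · simpa [Function.update_of_ne (show i ≠ i + 2 by omega)] using hturn

lemma exists_isStandard_snoc {n : ℕ} {w w' : ℕ → V} {y y' : V}
    (hc : CongWalks G side (n+1) w w') (hs : IsStandard (n+1) w w')
    (hlast : Indep G (w (n+1)) y (w' (n+1)) y') (hturn : w n = y ∨ w' n = y') :
    ∃ v v' : ℕ → V, CongWalks G side (n+2) v v' ∧ IsStandard (n+2) v v' ∧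
      v 0 = w 0 ∧ v' 0 = w' 0 ∧ v (n+1) = w (n+1) ∧ v' (n+1) = w' (n+1) ∧
      v (n+2) = y ∧ v' (n+2) = y' :=
  ⟨_, _, hc.snoc hlast, hs.snoc hturn, by simp, by simp, by simp, by simp, by simp, by simp⟩

/-- If the last steps are `p → x` and `p' → x'`, a new independent step `x → y`, `x' → y'`
is appended as the detour `x y x y` against `x' p' x' y'`, which is standard at every
new position. -/
lemma StandardGamma.step {a b x x' y y' : V} (h : StandardGamma G side a b x x')
    (hxy : Indep G x y x' y') : StandardGamma G side a b y y' := by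
  obtain ⟨m, u, u', hc, rfl, rfl, rfl, rfl, hs⟩ := h
  cases m with
  | zero =>
    exact ⟨1, _, _, hc.snoc hxy, by simp, by simp, by simp, by simp, fun i hi => by omega⟩
  | succ k =>
    have hback := (hc.2.2.2 k (by omega)).backtrack hxy
    obtain ⟨v₁, v₁', hc₁, hs₁, h₁0, h₁0', h₁x, -, h₁y, h₁p'⟩ :=
      exists_isStandard_snoc hc hs hback (Or.inr rfl)
    obtain ⟨v₂, v₂', hc₂, hs₂, h₂0, h₂0', h₂y, -, h₂x, h₂x'⟩ :=
      exists_isStandard_snoc hc₁ hs₁ (by rw [h₁y, h₁p']; exact hback.swap) (Or.inl h₁x)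
    obtain ⟨v₃, v₃', hc₃, hs₃, h₃0, h₃0', -, -, h₃y, h₃y'⟩ :=
      exists_isStandard_snoc hc₂ hs₂ (by rw [h₂x, h₂x']; exact hxy) (Or.inl (h₂y.trans h₁y))
    exact ⟨k+4, v₃, v₃', hc₃, by rw [h₃0, h₂0, h₁0], by rw [h₃0', h₂0', h₁0'], h₃y, h₃y', hs₃⟩

lemma standardGamma_of_congWalks {n : ℕ} {w w' : ℕ → V} (h : CongWalks G side n w w') :
    StandardGamma G side (w 0) (w' 0) (w n) (w' n) := by
  induction n with
  | zero => exact ⟨0, w, w', h, rfl, rfl, rfl, rfl, fun i hi => by omega⟩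
  | succ n ih => exact (ih h.of_succ).step (h.2.2.2 n n.lt_succ_self)

theorem stmt_7_general (G : SimpleGraph V) (side : V → Bool)
    (a b f g : V) (h : Gamma G side a b f g) :
    ∃ n, ∃ w w' : ℕ → V, CongWalks G side n w w' ∧
      w 0 = a ∧ w' 0 = b ∧ w n = f ∧ w' n = g ∧
      ∀ i, i + 2 ≤ n → (w i = w (i+2) ∨ w' i = w' (i+2)) := by
  obtain ⟨n, w, w', hc, rfl, rfl, rfl, rfl⟩ := h
  exact standardGamma_of_congWalks hc

/-- if there are congruent walks from `a` to `f` and from `b` to `g`,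
then there are standard such congruent walks (for every `i`, `w i = w (i+2)` or
`w' i = w' (i+2)`). -/
theorem stmt_7 (G : SimpleGraph V) (side : V → Bool) (hbip : IsBipartition G side)
    (a b f g : V) (h : Gamma G side a b f g) :
    ∃ n, ∃ w w' : ℕ → V, CongWalks G side n w w' ∧
      w 0 = a ∧ w' 0 = b ∧ w n = f ∧ w' n = g ∧
      ∀ i, i + 2 ≤ n → (w i = w (i+2) ∨ w' i = w' (i+2)) :=
  stmt_7_general G side a b f g h

end CocompBigraph
end

section
/- Let a_1...a_k and b_1...b_k be congruent walks (with k odd, starting in X and ending in Y) in a bipartite graph G. Let C_X be the set of all walk vertices lying in X and C_Y those lying in Y. Suppose c_1 ∈ X, c_2 ∈ Y satisfy: c_1c_2 ∈ E(G), c_1 is not adjacent to any vertex of C_Y, and c_2 is not adjacent to any vertex of C_X. Then (a_1, c_1) Γ (a_k, c_1) and (c_1, b_1) Γ (c_1, b_k). -/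
namespace CocompBigraph

variable {V : Type*}

/-!
The alternating walk `c₁ c₂ c₁ c₂ …` is congruent to any walk `u` that never has a vertex
adjacent to the alternating vertex one step ahead: disjointness of the `i`-th edges comes from
the same non-adjacency at steps `i` and `i + 1`. By bipartiteness, the hypotheses on `c₁` and `c₂`
say exactly this for both given walks, and since the walks have even length, the alternating walk
ends at `c₁` again.
-/

section

variable {G : SimpleGraph V} {side : V → Bool}

lemma Indep.symm {x y x' y' : V} (h : Indep G x y x' y') : Indep G x' y' x y :=
  let ⟨hxy, hxy', hx, hy, hxy'', hx'y⟩ := h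
  ⟨hxy', hxy, hx.symm, hy.symm, hx'y, hxy''⟩

lemma CongWalks.symm {n : ℕ} {w w' : ℕ → V} (h : CongWalks G side n w w') :
    CongWalks G side n w' w :=
  let ⟨hside, hw, hw', hind⟩ := h
  ⟨hside.symm, hw', hw, fun i hi => (hind i hi).symm⟩

lemma IsWalk.side_eq_iff_even (hbip : IsBipartition G side) {n : ℕ} {u : ℕ → V}
    (hu : IsWalk G n u) : ∀ i ≤ n, (side (u i) = side (u 0) ↔ Even i) := by
  intro i
  induction i with
  | zero => simp
  | succ i ih =>
    intro hi
    have hne := hbip _ _ (hu i hi)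
    rw [Nat.even_add_one, ← ih (by omega)]
    generalize side (u i) = a, side (u (i + 1)) = b, side (u 0) = c at hne ⊢
    cases a <;> cases b <;> cases c <;> simp_all

def alternatingWalk (c₁ c₂ : V) (i : ℕ) : V := if Even i then c₁ else c₂

lemma alternatingWalk_add_two (c₁ c₂ : V) (i : ℕ) :
    alternatingWalk c₁ c₂ (i + 2) = alternatingWalk c₁ c₂ i := by
  simp [alternatingWalk, Nat.even_add]

lemma isWalk_alternatingWalk {c₁ c₂ : V} (hadj : G.Adj c₁ c₂) (n : ℕ) :
    IsWalk G n (alternatingWalk c₁ c₂) := by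
  intro i _
  by_cases hi : Even i
  · simpa [alternatingWalk, hi, Nat.even_add_one] using hadj
  · simpa [alternatingWalk, hi, Nat.even_add_one] using hadj.symm

lemma congWalks_alternatingWalk {n : ℕ} {u : ℕ → V} {c₁ c₂ : V} (hu : IsWalk G n u)
    (hside : side (u 0) = side c₁) (hadj : G.Adj c₁ c₂)
    (hfar : ∀ i ≤ n, ¬ G.Adj (u i) (alternatingWalk c₁ c₂ (i + 1))) :
    CongWalks G side n u (alternatingWalk c₁ c₂) := by
  have hc := isWalk_alternatingWalk hadj n
  refine ⟨hside, hu, hc, fun i hi => ⟨hu i hi, hc i hi, ?_, ?_, hfar i hi.le, ?_⟩⟩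
  · intro heq
    have := hu i hi
    rw [heq, ← alternatingWalk_add_two] at this
    exact hfar (i + 1) hi this.symm
  · intro heq
    exact hfar i hi.le (heq ▸ hu i hi)
  · rw [← alternatingWalk_add_two]
    exact fun h => hfar (i + 1) hi h.symm

lemma not_adj_alternatingWalk_succ (hbip : IsBipartition G side) {n : ℕ} {u : ℕ → V}
    (hu : IsWalk G n u) (hstart : side (u 0) = true) {c₁ c₂ : V}
    (h₁ : ∀ i ≤ n, side (u i) = false → ¬ G.Adj c₁ (u i))
    (h₂ : ∀ i ≤ n, side (u i) = true → ¬ G.Adj c₂ (u i)) :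
    ∀ i ≤ n, ¬ G.Adj (u i) (alternatingWalk c₁ c₂ (i + 1)) := by
  intro i hi hadj
  have hpar := hu.side_eq_iff_even hbip i hi
  rw [hstart] at hpar
  by_cases heven : Even i
  · simp only [alternatingWalk, Nat.even_add_one, heven, not_true, if_false] at hadj
    exact h₂ i hi (hpar.2 heven) hadj.symm
  · simp only [alternatingWalk, Nat.even_add_one, heven, not_false_eq_true, if_true] at hadj
    exact h₁ i hi (by simpa [heven] using hpar) hadj.symm

end

theorem stmt_8_general (G : SimpleGraph V) (side : V → Bool) (hbip : IsBipartition G side)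
    (n : ℕ) (w w' : ℕ → V) (hcong : CongWalks G side n w w')
    (hstart : side (w 0) = true) (heven : Even n)
    (c1 c2 : V) (hc1 : side c1 = true)
    (hadj : G.Adj c1 c2)
    (h1 : ∀ i ≤ n, side (w i) = false → ¬ G.Adj c1 (w i))
    (h1' : ∀ i ≤ n, side (w' i) = false → ¬ G.Adj c1 (w' i))
    (h2 : ∀ i ≤ n, side (w i) = true → ¬ G.Adj c2 (w i))
    (h2' : ∀ i ≤ n, side (w' i) = true → ¬ G.Adj c2 (w' i)) :
    Gamma G side (w 0) c1 (w n) c1 ∧ Gamma G side c1 (w' 0) c1 (w' n) := by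
  obtain ⟨hside, hw, hw', -⟩ := hcong
  have hstart' : side (w' 0) = true := hside ▸ hstart
  have hcong₁ := congWalks_alternatingWalk hw (hstart.trans hc1.symm) hadj
    (not_adj_alternatingWalk_succ hbip hw hstart h1 h2)
  have hcong₂ := congWalks_alternatingWalk hw' (hstart'.trans hc1.symm) hadj
    (not_adj_alternatingWalk_succ hbip hw' hstart' h1' h2')
  have hend : alternatingWalk c1 c2 n = c1 := if_pos heven
  exact ⟨⟨n, w, _, hcong₁, rfl, rfl, rfl, hend⟩, ⟨n, _, w', hcong₂.symm, rfl, rfl, hend, rfl⟩⟩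

/-- (first case of Proposition 3.1) if `c₁c₂ ∈ E(G)`, `c₁` is adjacent
to no walk vertex on side `Y` and `c₂` to no walk vertex on side `X`, then
`(a₁,c₁) Γ (a_k,c₁)` and `(c₁,b₁) Γ (c₁,b_k)`. -/
theorem stmt_8 (G : SimpleGraph V) (side : V → Bool) (hbip : IsBipartition G side)
    (n : ℕ) (w w' : ℕ → V) (hcong : CongWalks G side n w w')
    (hstart : side (w 0) = true) (heven : Even n)
    (c1 c2 : V) (hc1 : side c1 = true) (hc2 : side c2 = false)
    (hadj : G.Adj c1 c2)
    (h1 : ∀ i ≤ n, side (w i) = false → ¬ G.Adj c1 (w i))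
    (h1' : ∀ i ≤ n, side (w' i) = false → ¬ G.Adj c1 (w' i))
    (h2 : ∀ i ≤ n, side (w i) = true → ¬ G.Adj c2 (w i))
    (h2' : ∀ i ≤ n, side (w' i) = true → ¬ G.Adj c2 (w' i)) :
    Gamma G side (w 0) c1 (w n) c1 ∧ Gamma G side c1 (w' 0) c1 (w' n) :=
  stmt_8_general G side hbip n w w' hcong hstart heven c1 c2 hc1 hadj h1 h1' h2 h2'

end CocompBigraph
end

section
/- In a bipartite graph G with bipartition (X,Y), for any distinct vertices a, b, c ∈ X: if (a,b) and (a,c) are relevant pairs lying in different implication classes, then (c,b) is relevant. -/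
namespace CocompBigraph

variable {V : Type*}

/-
A pair `(u,v)` is relevant as soon as it admits one congruent step, i.e. independent edges
`up`, `vq`. Take such edges `ay, by'` for `(a,b)` and `az, cz'` for `(a,c)`. If `ap, bq` are
independent and `c` sees `q` but not `p`, the steps `(a,b) → (p,q) → (a,c)` would join the two
classes; so `c` sees `p` whenever it sees `q`. Either `cz', by'` are independent, or this
forces the edges `cy` and `bz`, which are independent.
-/

lemma indep_of_not_adj {G : SimpleGraph V} {x y x' y' : V} (hxy : G.Adj x y)
    (hxy' : G.Adj x' y') (hxx' : x ≠ x') (hx : ¬ G.Adj x y') (hx' : ¬ G.Adj x' y) :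
    Indep G x y x' y' :=
  ⟨hxy, hxy', hxx', fun h => hx (h ▸ hxy), hx, hx'⟩

lemma exists_indep_of_relevant {G : SimpleGraph V} {side : V → Bool} {u v : V}
    (h : Relevant G side u v) : ∃ p q, Indep G u p v q := by
  obtain ⟨f, g, ⟨n, w, w', ⟨-, -, -, hind⟩, hw0, hw'0, hwn, hw'n⟩, hne⟩ := h
  rcases Nat.eq_zero_or_pos n with rfl | hn
  · exact absurd (by rw [← hwn, ← hw'n, hw0, hw'0]) hne
  · exact ⟨w 1, w' 1, hw0 ▸ hw'0 ▸ hind 0 hn⟩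

lemma relevant_of_indep {G : SimpleGraph V} {side : V → Bool} {u v p q : V}
    (hside : side u = side v) (h : Indep G u p v q) : Relevant G side u v := by
  refine ⟨p, q, ⟨1, fun i => if i = 0 then u else p, fun i => if i = 0 then v else q,
    ⟨hside, ?_, ?_, ?_⟩, rfl, rfl, rfl, rfl⟩,
    fun hpq => G.ne_of_adj h.1 (congrArg Prod.fst hpq).symm⟩
  all_goals
    intro i hi
    obtain rfl : i = 0 := by omega
  exacts [h.1, h.2.1, h]

lemma gamma_of_indep_of_indep {G : SimpleGraph V} {side : V → Bool} {u v u' v' p q : V}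
    (hside : side u = side v) (h : Indep G u p v q) (h' : Indep G p u' q v') :
    Gamma G side u v u' v' := by
  refine ⟨2, fun i => if i = 0 then u else if i = 1 then p else u',
    fun i => if i = 0 then v else if i = 1 then q else v',
    ⟨hside, ?_, ?_, ?_⟩, rfl, rfl, rfl, rfl⟩
  all_goals
    intro i hi
    obtain rfl | rfl : i = 0 ∨ i = 1 := by omega
  exacts [h.1, h'.1, h.2.1, h'.2.1, h, h']

lemma adj_of_adj_of_not_gamma {G : SimpleGraph V} {side : V → Bool} {a b c p q : V}
    (hside : side a = side b) (hab : a ≠ b) (h : ¬ Gamma G side a b a c)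
    (hap : G.Adj a p) (hbq : G.Adj b q) (haq : ¬ G.Adj a q) (hbp : ¬ G.Adj b p)
    (hcq : G.Adj c q) : G.Adj c p := by
  by_contra hcp
  exact h (gamma_of_indep_of_indep hside (indep_of_not_adj hap hbq hab haq hbp)
    (indep_of_not_adj hap.symm hcq.symm (fun h => haq (h ▸ hap)) (fun h => hcp h.symm)
      (fun h => haq h.symm)))

theorem stmt_10_general (G : SimpleGraph V) (side : V → Bool)
    (a b c : V) (ha : side a = true) (hb : side b = true) (hc : side c = true)
    (hab : a ≠ b) (hbc : b ≠ c)
    (h1 : Relevant G side a b) (h2 : Relevant G side a c)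
    (h3 : ¬ Gamma G side a b a c) :
    Relevant G side c b := by
  obtain ⟨y, y', hay, hby', -, -, hay', hby⟩ := exists_indep_of_relevant h1
  obtain ⟨z, z', haz, hcz', -, -, haz', hcz⟩ := exists_indep_of_relevant h2
  have hscb : side c = side b := hc.trans hb.symm
  have hsab : side a = side b := ha.trans hb.symm
  have relevant_of_cy_bz (hcy : G.Adj c y) (hbz : G.Adj b z) : Relevant G side c b :=
    relevant_of_indep hscb (indep_of_not_adj hcy hbz hbc.symm hcz hby)
  by_cases hcy' : G.Adj c y'
  · refine relevant_of_cy_bz (adj_of_adj_of_not_gamma hsab hab h3 hay hby' hay' hby hcy') ?_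
    by_contra hbz
    exact hcz (adj_of_adj_of_not_gamma hsab hab h3 haz hby' hay' hbz hcy')
  by_cases hbz' : G.Adj b z'
  · have hbz : G.Adj b z := by
      by_contra hbz
      exact hcz (adj_of_adj_of_not_gamma hsab hab h3 haz hbz' haz' hbz hcz')
    exact relevant_of_cy_bz (adj_of_adj_of_not_gamma hsab hab h3 hay hbz' haz' hby hcz') hbz
  exact relevant_of_indep hscb (indep_of_not_adj hcz' hby' hbc.symm hcy' hbz')

/-- for distinct `a, b, c` on side `X`, if `(a,b)` and `(a,c)` are
relevant and lie in different implication classes, then `(c,b)` is relevant. -/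
theorem stmt_10 (G : SimpleGraph V) (side : V → Bool) (hbip : IsBipartition G side)
    (a b c : V) (ha : side a = true) (hb : side b = true) (hc : side c = true)
    (hab : a ≠ b) (hac : a ≠ c) (hbc : b ≠ c)
    (h1 : Relevant G side a b) (h2 : Relevant G side a c)
    (h3 : ¬ Gamma G side a b a c) :
    Relevant G side c b :=
  stmt_10_general G side a b c ha hb hc hab hbc h1 h2 h3

end CocompBigraph
end

section
/- Let G be a bipartite graph with bipartition (X,Y) and let G⁺ be the auxiliary graph on the vertex set F of ordered pairs of distinct same-side vertices, where (u,v) is adjacent to (v,u) and to all (z,w) such that uw and vz are independent edges of G. If G⁺ is bipartite, then the complement of G admits a T-free orientation. -/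
/-!
Orient `u → v` when the pair `(u, v)` gets colour `true` in a proper 2-colouring of `G⁺`.
Since `(u, v)` and `(v, u)` are adjacent in `G⁺`, exactly one of them is coloured `true`;
the remaining edges of `G⁺` join precisely the pairs `(x, x')`, `(y, y')` of a `T`-configuration,
which therefore get different colours and cannot both be oriented forward.
-/

namespace CocompBigraph

variable {V : Type*}

def colourOrientation {side : V → Bool}
    (c : {p : V × V // p.1 ≠ p.2 ∧ side p.1 = side p.2} → Bool) (u v : V) : Prop :=
  ∃ h : u ≠ v ∧ side u = side v, c ⟨(u, v), h⟩ = true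

section colourOrientation

variable {side : V → Bool} (c : {p : V × V // p.1 ≠ p.2 ∧ side p.1 = side p.2} → Bool)

theorem colourOrientation_iff {u v : V} (huv : u ≠ v ∧ side u = side v) :
    colourOrientation c u v ↔ c ⟨(u, v), huv⟩ = true :=
  ⟨fun ⟨_, hc⟩ => hc, fun hc => ⟨huv, hc⟩⟩

theorem isOrientation_colourOrientation
    (hswap : ∀ u v (huv : u ≠ v ∧ side u = side v),
      c ⟨(u, v), huv⟩ ≠ c ⟨(v, u), huv.1.symm, huv.2.symm⟩) :
    IsOrientation side (colourOrientation c) := by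
  refine ⟨fun u v ⟨⟨hne, hs⟩, _⟩ => ⟨hs, hne⟩, fun u v hne hs => ?_⟩
  rw [colourOrientation_iff c ⟨hne, hs⟩, colourOrientation_iff c ⟨hne.symm, hs.symm⟩]
  have := hswap u v ⟨hne, hs⟩
  revert this
  cases c ⟨(u, v), hne, hs⟩ <;> cases c ⟨(v, u), hne.symm, hs.symm⟩ <;> decide

theorem tFree_colourOrientation {G : SimpleGraph V}
    (hc : ∀ p q, AuxAdj G p.1 q.1 → c p ≠ c q) :
    TFree G side (colourOrientation c) := by
  rintro x y x' y' - - - hxx' hyy' hxy hx'y' hxy' hx'y ⟨⟨hx, hcx⟩, ⟨hy, hcy⟩⟩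
  exact hc ⟨(x, x'), hx⟩ ⟨(y, y'), hy⟩ (Or.inr ⟨hxy', hx'y, hxx', hyy', hxy, hx'y'⟩)
    (hcx.trans hcy.symm)

end colourOrientation

theorem stmt_15_general (G : SimpleGraph V) (side : V → Bool)
    (h : AuxBipartite G side) :
    ∃ O : V → V → Prop, IsOrientation side O ∧ TFree G side O := by
  obtain ⟨c, hc⟩ := h
  refine ⟨colourOrientation c, isOrientation_colourOrientation c fun u v huv => ?_,
    tFree_colourOrientation c hc⟩
  exact hc ⟨(u, v), huv⟩ ⟨(v, u), huv.1.symm, huv.2.symm⟩ (Or.inl ⟨rfl, rfl⟩)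

/-- if the auxiliary graph `G⁺` is bipartite, then the complement of
`G` admits a `T`-free orientation. -/
theorem stmt_15 (G : SimpleGraph V) (side : V → Bool) (hbip : IsBipartition G side)
    (h : AuxBipartite G side) :
    ∃ O : V → V → Prop, IsOrientation side O ∧ TFree G side O :=
  stmt_15_general G side h

end CocompBigraph
end

section
/- If a bipartite graph G contains an induced cycle of length at least 8, then G is not a cocomparability bigraph (i.e., G has no S-free pair of orderings). -/
theorem IsOfFinAddOrder.rel_self_of_forall_rel_add {α M : Type*} [AddMonoid M] {a : M}
    (ha : IsOfFinAddOrder a) {R : α → α → Prop} (hR : ∀ ⦃x y z⦄, R x y → R y z → R x z)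
    {f : M → α} (hf : ∀ i, R (f i) (f (i + a))) (i : M) : R (f i) (f i) := by
  have hchain : ∀ n : ℕ, R (f i) (f (i + (n + 1) • a)) := by
    intro n
    induction n with
    | zero => simpa using hf i
    | succ n ih => simpa [succ_nsmul, add_assoc] using hR ih (hf _)
  have hord := hchain (addOrderOf a - 1)
  rwa [Nat.sub_add_cancel ha.addOrderOf_pos, addOrderOf_nsmul_eq_zero, add_zero] at hord

theorem ZMod.natCast_ne_zero_of_pos_of_lt {m k : ℕ} (h0 : 0 < k) (hk : k < m) :
    (k : ZMod m) ≠ 0 := by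
  rw [Ne, ZMod.natCast_eq_zero_iff]
  exact fun hdvd => absurd (Nat.le_of_dvd h0 hdvd) (by omega)

namespace CocompBigraph

variable {V : Type*}

structure IsSFreeOrder (G : SimpleGraph V) (side : V → Bool) (lt : V → V → Prop) : Prop where
  same_side_and_ne : ∀ ⦃u v⦄, lt u v → side u = side v ∧ u ≠ v
  lt_iff_not_lt : ∀ ⦃u v⦄, u ≠ v → side u = side v → (lt u v ↔ ¬ lt v u)
  trans : ∀ ⦃u v w⦄, lt u v → lt v w → lt u w
  sFree : ∀ ⦃u v w z⦄, side u ≠ side w → lt u v → lt w z →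
    G.Adj u z → G.Adj v w → G.Adj u w ∨ G.Adj v z

theorem SFreePair.exists_isSFreeOrder {G : SimpleGraph V} {side : V → Bool}
    (h : SFreePair G side) : ∃ lt, IsSFreeOrder G side lt :=
  let ⟨lt, h₁, h₂, h₃, h₄⟩ := h
  ⟨lt, h₁, h₂, h₃, h₄⟩

structure IsInducedCycle (G : SimpleGraph V) {m : ℕ} (f : ZMod m → V) : Prop where
  injective : Function.Injective f
  adj_iff : ∀ i j, G.Adj (f i) (f j) ↔ (cycleGraph m).Adj i j

namespace IsInducedCycle

variable {G : SimpleGraph V} {m : ℕ} {f : ZMod m → V} {i j : ZMod m} {k : ℕ}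

theorem ne_of_eq_add (hc : IsInducedCycle G f) (hk : 0 < k) (hkm : k < m) (hj : j = i + k) :
    f i ≠ f j := by
  refine hc.injective.ne fun hij => ZMod.natCast_ne_zero_of_pos_of_lt hk hkm ?_
  rw [hj] at hij
  linear_combination -hij

theorem adj_of_eq_add_one (hc : IsInducedCycle G f) (hm : 1 < m) (hj : j = i + 1) :
    G.Adj (f i) (f j) := by
  rw [hc.adj_iff]
  refine ⟨fun hij => ZMod.natCast_ne_zero_of_pos_of_lt (k := 1) one_pos hm ?_, Or.inl hj⟩
  rw [hj] at hij
  linear_combination -hij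

theorem not_adj_of_eq_add (hc : IsInducedCycle G f) (hk : 2 ≤ k) (hkm : k + 2 ≤ m)
    (hj : j = i + k) : ¬ G.Adj (f i) (f j) := by
  rw [hc.adj_iff]
  rintro ⟨-, h | h⟩ <;> subst hj
  · refine ZMod.natCast_ne_zero_of_pos_of_lt (m := m) (k := k - 1) (by omega) (by omega) ?_
    push_cast [Nat.cast_sub (by omega : 1 ≤ k)]
    linear_combination h
  · refine ZMod.natCast_ne_zero_of_pos_of_lt (m := m) (k := k + 1) (by omega) (by omega) ?_
    push_cast
    linear_combination -h

theorem side_eq_of_eq_add_two {side : V → Bool} (hc : IsInducedCycle G f)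
    (hbip : IsBipartition G side) (hm : 1 < m) (hj : j = i + 2) : side (f i) = side (f j) := by
  have h₁ := hbip _ _ (hc.adj_of_eq_add_one (i := i) hm rfl)
  have h₂ := hbip _ _ (hc.adj_of_eq_add_one (i := i + 1) (j := j) hm (by rw [hj]; ring))
  revert h₁ h₂
  cases side (f i) <;> cases side (f (i + 1)) <;> cases side (f j) <;> simp

theorem indep_add_four_add_three (hc : IsInducedCycle G f) (hm : 5 ≤ m) (i : ZMod m) :
    Indep G (f i) (f (i + 1)) (f (i + 4)) (f (i + 3)) :=
  ⟨hc.adj_of_eq_add_one (by omega) rfl,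
    (hc.adj_of_eq_add_one (by omega) (by ring)).symm,
    hc.ne_of_eq_add (k := 4) (by omega) (by omega) (by push_cast; ring),
    hc.ne_of_eq_add (k := 2) (by omega) (by omega) (by push_cast; ring),
    hc.not_adj_of_eq_add (k := 3) (by omega) (by omega) (by push_cast; ring),
    fun h => hc.not_adj_of_eq_add (k := 3) (by omega) (by omega) (by push_cast; ring) h.symm⟩

theorem indep_add_four_add_five (hc : IsInducedCycle G f) (hm : 7 ≤ m) (i : ZMod m) :
    Indep G (f i) (f (i + 1)) (f (i + 4)) (f (i + 5)) :=
  ⟨hc.adj_of_eq_add_one (by omega) rfl,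
    hc.adj_of_eq_add_one (by omega) (by ring),
    hc.ne_of_eq_add (k := 4) (by omega) (by omega) (by push_cast; ring),
    hc.ne_of_eq_add (k := 4) (by omega) (by omega) (by push_cast; ring),
    hc.not_adj_of_eq_add (k := 5) (by omega) (by omega) (by push_cast; ring),
    fun h => hc.not_adj_of_eq_add (k := 3) (by omega) (by omega) (by push_cast; ring) h.symm⟩

end IsInducedCycle

namespace IsSFreeOrder

variable {G : SimpleGraph V} {side : V → Bool} {lt : V → V → Prop}

theorem irrefl (hlt : IsSFreeOrder G side lt) (u : V) : ¬ lt u u :=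
  fun h => (hlt.same_side_and_ne h).2 rfl

theorem lt_of_not_lt (hlt : IsSFreeOrder G side lt) {u v : V} (hne : u ≠ v)
    (hs : side u = side v) (h : ¬ lt u v) : lt v u :=
  (hlt.lt_iff_not_lt hne.symm hs.symm).2 h

theorem lt_iff_lt_of_indep (hbip : IsBipartition G side) (hlt : IsSFreeOrder G side lt)
    {x y x' y' : V} (hind : Indep G x y x' y') (hx : side x = side x') (hy : side y = side y') :
    lt x x' ↔ lt y y' := by
  obtain ⟨hxy, hxy', hxx', hyy', hnxy', hnx'y⟩ := hind
  have hside : side x ≠ side y := hbip _ _ hxy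
  constructor
  · intro h
    by_contra h'
    have hy'y := hlt.lt_of_not_lt hyy' hy h'
    rcases hlt.sFree (fun h => hside (h.trans hy.symm)) h hy'y hxy hxy' with h | h
    exacts [hnxy' h, hnx'y h]
  · intro h
    by_contra h'
    have hx'x := hlt.lt_of_not_lt hxx' hx h'
    rcases hlt.sFree (fun h => hside (hx.trans h.symm)) h hx'x hxy.symm hxy'.symm with h | h
    exacts [hnx'y h.symm, hnxy' h.symm]

variable {m : ℕ} {f : ZMod m → V}

theorem lt_add_two_iff_lt_add_one_add_two (hbip : IsBipartition G side)
    (hlt : IsSFreeOrder G side lt) (hc : IsInducedCycle G f) (hm : 7 ≤ m) (i : ZMod m) :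
    lt (f i) (f (i + 2)) ↔ lt (f (i + 1)) (f (i + 1 + 2)) := by
  have hside₂ : ∀ j, side (f j) = side (f (j + 2)) := fun j =>
    hc.side_eq_of_eq_add_two hbip (by omega) rfl
  have hside₄ : ∀ j, side (f j) = side (f (j + 4)) := fun j =>
    (hside₂ j).trans ((hside₂ (j + 2)).trans (by ring_nf))
  have hreflect : ∀ j, lt (f j) (f (j + 4)) ↔ lt (f (j + 1)) (f (j + 3)) := fun j =>
    hlt.lt_iff_lt_of_indep hbip (hc.indep_add_four_add_three (by omega) j) (hside₄ j)
      ((hside₂ (j + 1)).trans (by ring_nf))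
  have htranslate : ∀ j, lt (f j) (f (j + 4)) ↔ lt (f (j + 1)) (f (j + 5)) := fun j =>
    hlt.lt_iff_lt_of_indep hbip (hc.indep_add_four_add_five hm j) (hside₄ j)
      ((hside₄ (j + 1)).trans (by ring_nf))
  have hprev := hreflect (i - 1)
  rw [sub_add_cancel, show i - 1 + 4 = i + 3 by ring, show i - 1 + 3 = i + 2 by ring] at hprev
  have hnext := htranslate (i - 1)
  rw [sub_add_cancel, show i - 1 + 4 = i + 3 by ring, show i - 1 + 5 = i + 4 by ring] at hnext
  rw [show i + 1 + 2 = i + 3 by ring, ← hreflect i, ← hnext, hprev]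

theorem forall_lt_add_two_or_forall_add_two_lt (hbip : IsBipartition G side)
    (hlt : IsSFreeOrder G side lt) (hc : IsInducedCycle G f) (hm : 7 ≤ m) :
    (∀ i, lt (f i) (f (i + 2))) ∨ ∀ i, lt (f (i + 2)) (f i) := by
  have : NeZero m := ⟨by omega⟩
  have hconst : ∀ i, lt (f i) (f (i + 2)) ↔ lt (f 0) (f 2) := by
    intro i
    obtain ⟨n, rfl⟩ := ZMod.natCast_zmod_surjective i
    induction n with
    | zero => simp
    | succ n ih =>
      rw [Nat.cast_succ, ← lt_add_two_iff_lt_add_one_add_two hbip hlt hc hm, ih]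
  by_cases h0 : lt (f 0) (f 2)
  · exact Or.inl fun i => (hconst i).2 h0
  · refine Or.inr fun i => hlt.lt_of_not_lt ?_ ?_ ((hconst i).not.2 h0)
    · exact hc.ne_of_eq_add (k := 2) (by omega) (by omega) (by push_cast; ring)
    · exact hc.side_eq_of_eq_add_two hbip (by omega) rfl

end IsSFreeOrder

/-- if a bipartite graph contains an induced cycle of length at least
`8`, then it has no `S`-free pair of orderings. -/
theorem stmt_18 (G : SimpleGraph V) (side : V → Bool) (hbip : IsBipartition G side)
    (h : ∃ m, 8 ≤ m ∧ HasInducedCycle G m) :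
    ¬ SFreePair G side := by
  intro hpair
  obtain ⟨lt, hlt⟩ := hpair.exists_isSFreeOrder
  obtain ⟨m, hm, f, hinj, hadj⟩ := h
  have : NeZero m := ⟨by omega⟩
  have hc : IsInducedCycle G f := ⟨hinj, hadj⟩
  have h2 : IsOfFinAddOrder (2 : ZMod m) := isOfFinAddOrder_of_finite 2
  rcases hlt.forall_lt_add_two_or_forall_add_two_lt hbip hc (by omega) with hup | hdown
  · exact hlt.irrefl _ (h2.rel_self_of_forall_rel_add hlt.trans hup 0)
  · exact hlt.irrefl _ (h2.rel_self_of_forall_rel_add (R := fun u v => lt v u)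
      (fun _ _ _ huv hvw => hlt.trans hvw huv) hdown 0)

end CocompBigraph
end
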